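/- arXiv:2206.03793 — 2 statements merged into one kernel-verified Lean document; each statement's English description precedes it below -/
import Mathlib

section
/- Let P and Q be abstract polytopes that are relatively prime with respect to the join. Then Aut(P * Q) is isomorphic as a group to Aut(P) × Aut(Q). -/
universe u v

/-- An abstract polytope of rank `n ≥ -1`: a partial order with a least element (the `⊥` of the
`OrderBot` instance) and a greatest element, in which every maximal chain has exactly `n + 2`
elements, every interval admitting a maximal chain of at least 4 elements is connected, and the
diamond condition holds. -/
structure IsAbstractPolytope (P : Type u) [PartialOrder P] [OrderBot P] (n : ℤ) : Prop where
  neg_one_le : -1 ≤ n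
  exists_top : ∃ t : P, IsTop t
  maxChain_card : ∀ s : Set P, IsMaxChain (· ≤ ·) s → s.ncard = (n + 2).toNat
  connected : ∀ x z : P, x ≤ z →
      (∃ c : Set (Set.Icc x z), IsMaxChain (· ≤ ·) c ∧ 4 ≤ c.ncard) →
      ∀ F G : Set.Icc x z, (F : P) ≠ x → (F : P) ≠ z → (G : P) ≠ x → (G : P) ≠ z →
        Relation.ReflTransGen
          (fun a b : Set.Icc x z =>
            ((a : P) ≠ x ∧ (a : P) ≠ z ∧ (b : P) ≠ x ∧ (b : P) ≠ z) ∧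
              ((a : P) ≤ (b : P) ∨ (b : P) ≤ (a : P))) F G
  diamond : ∀ x z : P, x < z →
      (∀ c : Set (Set.Icc x z), IsMaxChain (· ≤ ·) c → c.ncard = 4) →
      {y : P | x < y ∧ y < z}.ncard = 2

/-- `x` has rank `k` if every maximal chain of the interval `[⊥, x] = Set.Iic x`
has exactly `k + 2` elements. -/
def HasRank {P : Type u} [PartialOrder P] [OrderBot P] (x : P) (k : ℤ) : Prop :=
  ∀ c : Set (Set.Iic x), IsMaxChain (· ≤ ·) c → c.ncard = (k + 2).toNat

/-- The Cartesian product `P ×c Q` of two bounded posets: the subposet of `P × Q`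
consisting of `(⊥, ⊥)` together with all pairs with both entries different from `⊥`.
(The join `P * Q` is just `P × Q` with the componentwise order.) -/
abbrev CartProd (P : Type u) (Q : Type v) [PartialOrder P] [OrderBot P]
    [PartialOrder Q] [OrderBot Q] : Type (max u v) :=
  {x : P × Q // x = (⊥, ⊥) ∨ (x.1 ≠ ⊥ ∧ x.2 ≠ ⊥)}

instance CartProd.instOrderBot (P : Type u) (Q : Type v) [PartialOrder P] [OrderBot P]
    [PartialOrder Q] [OrderBot Q] : OrderBot (CartProd P Q) where
  bot := ⟨(⊥, ⊥), Or.inl rfl⟩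
  bot_le x := show ((⊥, ⊥) : P × Q) ≤ x.val from bot_le

/-- The iterated Cartesian product of a family of bounded posets: tuples which are either
everywhere `⊥` or nowhere `⊥`. -/
abbrev CartPi {ι : Type v} (Q : ι → Type u) [∀ i, PartialOrder (Q i)] [∀ i, OrderBot (Q i)] :
    Type (max u v) :=
  {f : (i : ι) → Q i // (∀ i, f i = ⊥) ∨ (∀ i, f i ≠ ⊥)}

instance CartPi.instOrderBot {ι : Type v} (Q : ι → Type u) [∀ i, PartialOrder (Q i)]
    [∀ i, OrderBot (Q i)] : OrderBot (CartPi Q) where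
  bot := ⟨fun _ => ⊥, Or.inl fun _ => rfl⟩
  bot_le f := show (fun _ => ⊥) ≤ f.val from bot_le

/-- The `k`-fold Cartesian product of a bounded poset with itself. -/
abbrev CartPow (P : Type u) [PartialOrder P] [OrderBot P] (k : ℕ) : Type u :=
  CartPi (fun _ : Fin k => P)

/-- A bundled poset with a least element. -/
structure BddPoset : Type (u + 1) where
  carrier : Type u
  [po : PartialOrder carrier]
  [ob : OrderBot carrier]

attribute [instance] BddPoset.po BddPoset.ob

instance : CoeSort BddPoset.{u} (Type u) := ⟨BddPoset.carrier⟩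

/-- Prime with respect to the join: not order-isomorphic to a join `A * B = A × B` of two
abstract polytopes of rank at least `0`. -/
def JoinPrime (X : Type u) [PartialOrder X] [OrderBot X] : Prop :=
  ¬ ∃ (A B : BddPoset.{u}) (a b : ℤ), 0 ≤ a ∧ 0 ≤ b ∧
      IsAbstractPolytope A.carrier a ∧ IsAbstractPolytope B.carrier b ∧
      Nonempty (X ≃o (A.carrier × B.carrier))

/-- Prime with respect to the Cartesian product: not order-isomorphic to a Cartesian product
of two abstract polytopes of rank at least `1`. -/
def CartPrime (X : Type u) [PartialOrder X] [OrderBot X] : Prop :=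
  ¬ ∃ (A B : BddPoset.{u}) (a b : ℤ), 1 ≤ a ∧ 1 ≤ b ∧
      IsAbstractPolytope A.carrier a ∧ IsAbstractPolytope B.carrier b ∧
      Nonempty (X ≃o CartProd A.carrier B.carrier)

/-- `R` is a factor of `X` with respect to the join. -/
def JoinFactor (R : BddPoset.{u}) (X : Type u) [PartialOrder X] [OrderBot X] : Prop :=
  ∃ S : BddPoset.{u}, (∃ s : ℤ, IsAbstractPolytope S.carrier s) ∧
    Nonempty (X ≃o (R.carrier × S.carrier))

/-- `R` is a factor of `X` with respect to the Cartesian product. -/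
def CartFactor (R : BddPoset.{u}) (X : Type u) [PartialOrder X] [OrderBot X] : Prop :=
  ∃ S : BddPoset.{u}, (∃ s : ℤ, IsAbstractPolytope S.carrier s) ∧
    Nonempty (X ≃o CartProd R.carrier S.carrier)

/-- Relatively prime with respect to the join: no join-prime abstract polytope of rank `≥ 0` is a
join-factor of both. -/
def JoinRelPrime (X : Type u) [PartialOrder X] [OrderBot X]
    (Y : Type u) [PartialOrder Y] [OrderBot Y] : Prop :=
  ¬ ∃ R : BddPoset.{u}, (∃ r : ℤ, 0 ≤ r ∧ IsAbstractPolytope R.carrier r) ∧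
      JoinPrime R.carrier ∧ JoinFactor R X ∧ JoinFactor R Y

/-- Relatively prime with respect to the Cartesian product. -/
def CartRelPrime (X : Type u) [PartialOrder X] [OrderBot X]
    (Y : Type u) [PartialOrder Y] [OrderBot Y] : Prop :=
  ¬ ∃ R : BddPoset.{u}, (∃ r : ℤ, 1 ≤ r ∧ IsAbstractPolytope R.carrier r) ∧
      CartPrime R.carrier ∧ CartFactor R X ∧ CartFactor R Y

/-- A pyramid: order-isomorphic to `Q * pt` for some abstract polytope `Q`, where
`pt = Bool` is the two-element chain. -/
def IsPyramid (X : Type u) [PartialOrder X] [OrderBot X] : Prop :=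
  ∃ Q : BddPoset.{u}, (∃ q : ℤ, IsAbstractPolytope Q.carrier q) ∧
    Nonempty (X ≃o (Q.carrier × Bool))

/-- A prism: order-isomorphic to `Q ×c I` for some abstract polytope `Q`, where
`I = Bool × Bool` is the four-element rank-one polytope. -/
def IsPrism (X : Type u) [PartialOrder X] [OrderBot X] : Prop :=
  ∃ Q : BddPoset.{u}, (∃ q : ℤ, IsAbstractPolytope Q.carrier q) ∧
    Nonempty (X ≃o CartProd Q.carrier (Bool × Bool))

/-- The homomorphism from `Equiv.Perm ι` to automorphisms of `ι → G` permuting the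
coordinates: `σ` sends `v` to `v ∘ σ⁻¹`. -/
def permHom (ι : Type v) (G : Type u) [Group G] : Equiv.Perm ι →* MulAut (ι → G) where
  toFun σ :=
    { toFun := fun v => v ∘ σ.symm
      invFun := fun v => v ∘ σ
      left_inv := fun v => by funext i; simp
      right_inv := fun v => by funext i; simp
      map_mul' := fun v w => rfl }
  map_one' := by apply MulEquiv.ext; intro v; funext i; rfl
  map_mul' σ τ := by apply MulEquiv.ext; intro v; funext i; rfl

/-!
An automorphism `φ` of `P × Q` sends `(⊤, ⊥)` to some `(c, d)` and `(⊥, ⊤)` to some `(c', d')`.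
Comparing the two product decompositions of `P × Q` gives `P ≃o [⊥, c] × [⊥, d]` and
`Q ≃o [⊥, d] × [⊥, d']`, the latter by projecting `{⊥} × Q` onto the images of the two axes.
Factors of polytopes are polytopes, so if `d ≠ ⊥` then `[⊥, d]` is a polytope of nonnegative rank.
Since rank is additive (`rank (A × B) = rank A + rank B + 1`), induction on rank gives it a
join-prime factor, which would be a common factor of `P` and `Q`. Hence `φ` preserves `P × {⊥}`,
and symmetrically `{⊥} × Q`, so it is `f × g` for automorphisms `f` of `P` and `g` of `Q`.
-/

open Set

lemma IsMaxChain.mem_of_forall_le_or_le {α : Type*} [LE α] {s : Set α}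
    (hs : IsMaxChain (· ≤ ·) s) {a : α} (h : ∀ b ∈ s, a ≤ b ∨ b ≤ a) : a ∈ s := by
  rw [hs.2 (hs.1.insert fun b hb _ => h b hb) (subset_insert a s)]
  exact mem_insert a s

namespace Prod
variable {α β : Type*} [Preorder α] [PartialOrder β] [OrderBot β]

lemma mk_fst_bot_of_le {x : α × β} {a : α} (h : x ≤ (a, ⊥)) : (x.1, ⊥) = x :=
  Prod.ext rfl (le_bot_iff.mp h.2).symm

lemma snd_eq_bot_iff_le {t : α} (ht : IsTop t) {x : α × β} : x.2 = ⊥ ↔ x ≤ (t, ⊥) :=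
  ⟨fun h => ⟨ht _, h.le⟩, fun h => le_bot_iff.mp h.2⟩

lemma mk_bot_snd_of_le {x : β × α} {a : α} (h : x ≤ (⊥, a)) : (⊥, x.2) = x :=
  Prod.ext (le_bot_iff.mp h.1).symm rfl

lemma isLUB_pair_mk_bot [OrderBot α] (a : α) (b : β) : IsLUB {(a, ⊥), (⊥, b)} (a, b) :=
  ⟨by rintro _ (rfl | rfl) <;> simp [Prod.le_def],
    fun _ hw => ⟨(hw (mem_insert _ _)).1, (hw (mem_insert_of_mem _ rfl)).2⟩⟩

end Prod

namespace OrderIso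

section Basic
variable {α β γ δ : Type*}

def prodCongr [LE α] [LE β] [LE γ] [LE δ] (e : α ≃o β) (f : γ ≃o δ) : α × γ ≃o β × δ where
  toEquiv := e.toEquiv.prodCongr f.toEquiv
  map_rel_iff' := by simp [Prod.le_def]

@[simp]
lemma prodCongr_apply [LE α] [LE β] [LE γ] [LE δ] (e : α ≃o β) (f : γ ≃o δ) (x : α × γ) :
    e.prodCongr f x = (e x.1, f x.2) := rfl

variable (α β) in
def prodCongrHom [LE α] [LE β] : (α ≃o α) × (β ≃o β) →* (α × β ≃o α × β) where
  toFun f := f.1.prodCongr f.2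
  map_one' := rfl
  map_mul' _ _ := rfl

lemma prodCongrHom_injective [LE α] [LE β] [Nonempty α] [Nonempty β] :
    Function.Injective (prodCongrHom α β) := fun _ _ h =>
  let ⟨a₀⟩ := ‹Nonempty α›
  let ⟨b₀⟩ := ‹Nonempty β›
  Prod.ext (RelIso.ext fun a => congrArg Prod.fst (DFunLike.congr_fun h (a, b₀)))
    (RelIso.ext fun b => congrArg Prod.snd (DFunLike.congr_fun h (a₀, b)))

def prodPUnit (α : Type*) [LE α] : α ≃o α × PUnit where
  toEquiv := (Equiv.prodPUnit α).symm
  map_rel_iff' := by simp [Prod.le_def]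

def IccCongr [Preorder α] [Preorder β] (e : α ≃o β) (x z : α) : Icc x z ≃o Icc (e x) (e z) where
  toEquiv := e.toEquiv.subtypeEquiv fun a => by simp [e.le_iff_le]
  map_rel_iff' := e.le_iff_le

def IccProdBot [Preorder α] [PartialOrder β] [OrderBot β] (x z : α) :
    Icc x z ≃o Icc (x, (⊥ : β)) (z, ⊥) where
  toFun a := ⟨(a, ⊥), ⟨a.2.1, le_rfl⟩, ⟨a.2.2, le_rfl⟩⟩
  invFun p := ⟨p.1.1, p.2.1.1, p.2.2.1⟩
  left_inv _ := rfl
  right_inv p := Subtype.ext (Prod.mk_fst_bot_of_le p.2.2)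
  map_rel_iff' := by simp [← Subtype.coe_le_coe]

variable [PartialOrder α] [PartialOrder β] {x z : α} {x' z' : β}

lemma coe_Icc_apply_eq_left_iff (e : Icc x z ≃o Icc x' z') (a : Icc x z) :
    (e a : β) = x' ↔ (a : α) = x := by
  have : Fact (x ≤ z) := ⟨a.2.1.trans a.2.2⟩
  have : Fact (x' ≤ z') := ⟨(e a).2.1.trans (e a).2.2⟩
  change (e a : β) = ((⊥ : Icc x' z') : β) ↔ (a : α) = ((⊥ : Icc x z) : α)
  rw [Subtype.coe_inj, Subtype.coe_inj, ← e.map_bot, e.injective.eq_iff]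

lemma coe_Icc_apply_eq_right_iff (e : Icc x z ≃o Icc x' z') (a : Icc x z) :
    (e a : β) = z' ↔ (a : α) = z := by
  have : Fact (x ≤ z) := ⟨a.2.1.trans a.2.2⟩
  have : Fact (x' ≤ z') := ⟨(e a).2.1.trans (e a).2.2⟩
  change (e a : β) = ((⊤ : Icc x' z') : β) ↔ (a : α) = ((⊤ : Icc x z) : α)
  rw [Subtype.coe_inj, Subtype.coe_inj, ← e.map_top, e.injective.eq_iff]

lemma left_lt_coe_Icc_apply_iff (e : Icc x z ≃o Icc x' z') (a : Icc x z) :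
    x' < (e a : β) ↔ x < (a : α) := by
  rw [(e a).2.1.lt_iff_ne', a.2.1.lt_iff_ne', ne_eq, ne_eq, e.coe_Icc_apply_eq_left_iff]

lemma coe_Icc_apply_lt_right_iff (e : Icc x z ≃o Icc x' z') (a : Icc x z) :
    (e a : β) < z' ↔ (a : α) < z := by
  rw [(e a).2.2.lt_iff_ne, a.2.2.lt_iff_ne, ne_eq, ne_eq, e.coe_Icc_apply_eq_right_iff]

end Basic

end OrderIso

section Intervals
variable {α β : Type*} [PartialOrder α] [PartialOrder β]

/-- The `connected` clause of `IsAbstractPolytope` for the interval `[x, z]`. -/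
def IntervalConnected (x z : α) : Prop :=
  (∃ c : Set (Set.Icc x z), IsMaxChain (· ≤ ·) c ∧ 4 ≤ c.ncard) →
    ∀ F G : Set.Icc x z, (F : α) ≠ x → (F : α) ≠ z → (G : α) ≠ x → (G : α) ≠ z →
      Relation.ReflTransGen
        (fun a b : Set.Icc x z =>
          ((a : α) ≠ x ∧ (a : α) ≠ z ∧ (b : α) ≠ x ∧ (b : α) ≠ z) ∧
            ((a : α) ≤ (b : α) ∨ (b : α) ≤ (a : α))) F G

/-- The `diamond` clause of `IsAbstractPolytope` for the interval `[x, z]`. -/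
def IntervalDiamond (x z : α) : Prop :=
  (∀ c : Set (Set.Icc x z), IsMaxChain (· ≤ ·) c → c.ncard = 4) →
    {y : α | x < y ∧ y < z}.ncard = 2

variable {x z : α} {x' z' : β}

lemma IntervalConnected.of_orderIso (e : Icc x z ≃o Icc x' z') (h : IntervalConnected x' z') :
    IntervalConnected x z := by
  rintro ⟨c, hc, hc4⟩ F G hFx hFz hGx hGz
  have hc' : ∃ c' : Set (Icc x' z'), IsMaxChain (· ≤ ·) c' ∧ 4 ≤ c'.ncard :=
    ⟨e '' c, hc.image e, by rwa [ncard_image_of_injective _ e.injective]⟩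
  rw [← e.symm_apply_apply F, ← e.symm_apply_apply G]
  refine (h hc' (e F) (e G) (by rwa [ne_eq, e.coe_Icc_apply_eq_left_iff])
    (by rwa [ne_eq, e.coe_Icc_apply_eq_right_iff]) (by rwa [ne_eq, e.coe_Icc_apply_eq_left_iff])
    (by rwa [ne_eq, e.coe_Icc_apply_eq_right_iff])).lift e.symm fun a b hab => ?_
  simpa [Function.onFun, e.symm.coe_Icc_apply_eq_left_iff, e.symm.coe_Icc_apply_eq_right_iff,
    Subtype.coe_le_coe] using hab

lemma IntervalDiamond.of_orderIso (e : Icc x z ≃o Icc x' z') (h : IntervalDiamond x' z') :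
    IntervalDiamond x z := by
  intro hc
  have hc' : ∀ c : Set (Icc x' z'), IsMaxChain (· ≤ ·) c → c.ncard = 4 := fun c hc' => by
    rw [← hc _ (hc'.image e.symm), ncard_image_of_injective _ e.symm.injective]
  rw [← h hc']
  refine ncard_congr (fun y hy => (e ⟨y, hy.1.le, hy.2.le⟩ : β)) (fun y hy => ?_) ?_ ?_
  · exact ⟨(e.left_lt_coe_Icc_apply_iff _).mpr hy.1, (e.coe_Icc_apply_lt_right_iff _).mpr hy.2⟩
  · intro a b _ _ hab
    exact congrArg Subtype.val (e.injective (Subtype.ext hab))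
  · intro b hb
    refine ⟨e.symm ⟨b, hb.1.le, hb.2.le⟩, ⟨?_, ?_⟩, by simp only [e.apply_symm_apply]⟩
    · exact (e.symm.left_lt_coe_Icc_apply_iff _).mpr hb.1
    · exact (e.symm.coe_Icc_apply_lt_right_iff _).mpr hb.2

end Intervals

namespace IsAbstractPolytope
variable {α β : Type*} [PartialOrder α] [OrderBot α] [PartialOrder β] [OrderBot β] {n : ℤ}

theorem congr (h : IsAbstractPolytope α n) (e : α ≃o β) : IsAbstractPolytope β n where
  neg_one_le := h.neg_one_le
  exists_top := let ⟨t, ht⟩ := h.exists_top; ⟨e t, fun b => e.symm_apply_le.mp (ht _)⟩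
  maxChain_card s hs := by
    rw [← h.maxChain_card _ (hs.image e.symm), ncard_image_of_injective _ e.symm.injective]
  connected x z hxz :=
    IntervalConnected.of_orderIso (e.symm.IccCongr x z) (h.connected _ _ (e.symm.monotone hxz))
  diamond x z hxz :=
    IntervalDiamond.of_orderIso (e.symm.IccCongr x z) (h.diamond _ _ (e.symm.strictMono hxz))

theorem finite_of_isMaxChain (h : IsAbstractPolytope α n) {s : Set α}
    (hs : IsMaxChain (· ≤ ·) s) : s.Finite :=
  finite_of_ncard_pos (by rw [h.maxChain_card s hs]; have := h.neg_one_le; omega)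

theorem nonneg_of_ne_bot (h : IsAbstractPolytope α n) {x : α} (hx : x ≠ ⊥) : 0 ≤ n := by
  obtain ⟨s, hs, hxs⟩ := (subsingleton_singleton (a := x)).isChain.exists_maxChain (r := (· ≤ ·))
  have hpair : ({⊥, x} : Set α) ⊆ s := insert_subset hs.bot_mem hxs
  have := ncard_le_ncard hpair (h.finite_of_isMaxChain hs)
  rw [ncard_pair hx.symm, h.maxChain_card s hs] at this
  omega

end IsAbstractPolytope

theorem isAbstractPolytope_punit : IsAbstractPolytope PUnit (-1) where
  neg_one_le := le_rfl
  exists_top := ⟨⊥, fun _ => le_rfl⟩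
  maxChain_card s hs := by
    rw [ncard_eq_one.mpr ⟨⊥, eq_singleton_iff_unique_mem.mpr ⟨hs.bot_mem, fun _ _ => rfl⟩⟩]
    rfl
  connected _ _ _ _ F _ hF := absurd rfl hF
  diamond _ _ h := absurd rfl h.ne

section ProdChain
variable {α β : Type*}

def prodChain [Bot β] (s : Set α) (t : α) (s' : Set β) : Set (α × β) :=
  (·, ⊥) '' s ∪ (t, ·) '' s'

theorem ncard_prodChain_add_one [Bot β] {s : Set α} {s' : Set β} {t : α} (ht : t ∈ s)
    (hs' : ⊥ ∈ s') (hfin : (prodChain s t s').Finite) :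
    (prodChain s t s').ncard + 1 = s.ncard + s'.ncard := by
  have hinj : Function.Injective fun a : α => (a, (⊥ : β)) := fun _ _ h => congrArg Prod.fst h
  have hinj' : Function.Injective fun b : β => (t, b) := fun _ _ h => congrArg Prod.snd h
  have hinter : (·, ⊥) '' s ∩ (t, ·) '' s' = {(t, (⊥ : β))} := by
    refine eq_singleton_iff_unique_mem.mpr ⟨⟨⟨t, ht, rfl⟩, ⟨⊥, hs', rfl⟩⟩, ?_⟩
    rintro _ ⟨⟨a, -, rfl⟩, ⟨b, -, hb⟩⟩
    simp_all [Prod.ext_iff]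
  have := ncard_union_add_ncard_inter _ _ (hfin.subset subset_union_left)
    (hfin.subset subset_union_right)
  rwa [hinter, ncard_singleton, ncard_image_of_injective _ hinj,
    ncard_image_of_injective _ hinj'] at this

theorem isMaxChain_prodChain [PartialOrder α] [PartialOrder β] [OrderBot β] {s : Set α}
    {s' : Set β} {t : α} (ht : IsTop t) (hs : IsMaxChain (· ≤ ·) s) (hs' : IsMaxChain (· ≤ ·) s') :
    IsMaxChain (· ≤ ·) (prodChain s t s') := by
  refine ⟨?_, fun u hu hsub => hsub.antisymm fun p hp => ?_⟩
  · rintro _ (⟨a, ha, rfl⟩ | ⟨b, hb, rfl⟩) _ (⟨a', ha', rfl⟩ | ⟨b', hb', rfl⟩) _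
    · exact (hs.1.total ha ha').imp (⟨·, le_rfl⟩) (⟨·, le_rfl⟩)
    · exact Or.inl ⟨ht a, bot_le⟩
    · exact Or.inr ⟨ht a', bot_le⟩
    · exact (hs'.1.total hb hb').imp (⟨le_rfl, ·⟩) (⟨le_rfl, ·⟩)
  have hcomp : ∀ q ∈ u, p ≤ q ∨ q ≤ p := fun q hq => hu.total hp hq
  rcases hcomp (t, ⊥) (hsub (Or.inl ⟨t, hs.mem_of_forall_le_or_le fun b _ => Or.inr (ht b), rfl⟩))
    with hle | hge
  · refine Or.inl ⟨p.1, hs.mem_of_forall_le_or_le fun a ha => ?_, Prod.mk_fst_bot_of_le hle⟩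
    exact (hcomp _ (hsub (Or.inl ⟨a, ha, rfl⟩))).imp (·.1) (·.1)
  · have hp : (t, p.2) = p := Prod.ext (ht p.1 |>.antisymm hge.1).symm rfl
    refine Or.inr ⟨p.2, hs'.mem_of_forall_le_or_le fun b hb => ?_, hp⟩
    exact (hcomp _ (hsub (Or.inr ⟨b, hb, rfl⟩))).imp (·.2) (·.2)

end ProdChain

namespace IsAbstractPolytope
variable {α β : Type*} [PartialOrder α] [OrderBot α] [PartialOrder β] [OrderBot β] {n : ℤ}

theorem ncard_add_ncard (h : IsAbstractPolytope (α × β) n) {t : α} (ht : IsTop t) {s : Set α}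
    {s' : Set β} (hs : IsMaxChain (· ≤ ·) s) (hs' : IsMaxChain (· ≤ ·) s') :
    s.ncard + s'.ncard = (n + 2).toNat + 1 := by
  have hC := isMaxChain_prodChain ht hs hs'
  rw [← ncard_prodChain_add_one (hs.mem_of_forall_le_or_le fun b _ => Or.inr (ht b)) hs'.bot_mem
    (h.finite_of_isMaxChain hC), h.maxChain_card _ hC]

theorem of_prod_left (h : IsAbstractPolytope (α × β) n) : ∃ a, IsAbstractPolytope α a := by
  obtain ⟨⟨t, t'⟩, ht⟩ := h.exists_top
  have htα : IsTop t := fun a => (ht (a, t')).1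
  obtain ⟨s, hs⟩ : ∃ s : Set α, IsMaxChain (· ≤ ·) s := ⟨_, maxChain_spec⟩
  obtain ⟨s', hs'⟩ : ∃ s' : Set β, IsMaxChain (· ≤ ·) s' := ⟨_, maxChain_spec⟩
  have hcard := h.ncard_add_ncard htα hs hs'
  have hpos : 0 < s.ncard := by
    have hfin := h.finite_of_isMaxChain (isMaxChain_prodChain htα hs hs')
    refine (ncard_pos ?_).mpr ⟨⊥, hs.bot_mem⟩
    exact (hfin.preimage fun _ _ _ _ h => congrArg Prod.fst h).subset
      fun a ha => Or.inl ⟨a, ha, rfl⟩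
  refine ⟨s.ncard - 2, by omega, ⟨t, htα⟩, fun r hr => ?_, fun x z hxz => ?_, fun x z hxz => ?_⟩
  · have := h.ncard_add_ncard htα hr hs'
    omega
  · exact IntervalConnected.of_orderIso (OrderIso.IccProdBot x z)
      (h.connected (x, ⊥) (z, ⊥) ⟨hxz, le_rfl⟩)
  · exact IntervalDiamond.of_orderIso (OrderIso.IccProdBot x z)
      (h.diamond _ _ (Prod.mk_lt_mk_of_lt_of_le hxz le_rfl))

theorem of_prod_right (h : IsAbstractPolytope (α × β) n) : ∃ b, IsAbstractPolytope β b :=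
  (h.congr OrderIso.prodComm).of_prod_left

theorem rank_prod {a b : ℤ} (hα : IsAbstractPolytope α a) (hβ : IsAbstractPolytope β b)
    (h : IsAbstractPolytope (α × β) n) : n = a + b + 1 := by
  obtain ⟨⟨t, t'⟩, ht⟩ := h.exists_top
  obtain ⟨s, hs⟩ : ∃ s : Set α, IsMaxChain (· ≤ ·) s := ⟨_, maxChain_spec⟩
  obtain ⟨s', hs'⟩ : ∃ s' : Set β, IsMaxChain (· ≤ ·) s' := ⟨_, maxChain_spec⟩
  have := h.ncard_add_ncard (fun a => (ht (a, t')).1) hs hs'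
  rw [hα.maxChain_card s hs, hβ.maxChain_card s' hs'] at this
  have := hα.neg_one_le
  have := hβ.neg_one_le
  have := h.neg_one_le
  omega

end IsAbstractPolytope

theorem JoinRelPrime.symm {X Y : Type u} [PartialOrder X] [OrderBot X] [PartialOrder Y]
    [OrderBot Y] (h : JoinRelPrime X Y) : JoinRelPrime Y X :=
  fun ⟨R, hR, hRprime, hY, hX⟩ => h ⟨R, hR, hRprime, hX, hY⟩

theorem JoinFactor.of_orderIso_prod {R : BddPoset.{u}} {A B X : Type u} [PartialOrder A]
    [OrderBot A] [PartialOrder B] [OrderBot B] [PartialOrder X] [OrderBot X] {n : ℤ}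
    (hR : JoinFactor R A) (hX : IsAbstractPolytope X n) (e : X ≃o A × B) : JoinFactor R X := by
  obtain ⟨S, -, ⟨f⟩⟩ := hR
  let g : X ≃o R × (S × B) :=
    e.trans ((f.prodCongr (OrderIso.refl B)).trans (OrderIso.prodAssoc _ _ _))
  exact ⟨⟨S × B⟩, (hX.congr g).of_prod_right, ⟨g⟩⟩

theorem IsAbstractPolytope.exists_joinPrime_joinFactor {X : Type u} [PartialOrder X] [OrderBot X]
    {k : ℤ} (hX : IsAbstractPolytope X k) (hk : 0 ≤ k) :
    ∃ R : BddPoset.{u}, (∃ r : ℤ, 0 ≤ r ∧ IsAbstractPolytope R.carrier r) ∧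
      JoinPrime R.carrier ∧ JoinFactor R X := by
  lift k to ℕ using hk
  induction k using Nat.strong_induction_on generalizing X with
  | _ k ih =>
    by_cases hprime : JoinPrime X
    · exact ⟨⟨X⟩, ⟨k, k.cast_nonneg, hX⟩, hprime,
        ⟨⟨PUnit⟩, ⟨-1, isAbstractPolytope_punit⟩, ⟨OrderIso.prodPUnit X⟩⟩⟩
    obtain ⟨A, B, a, b, ha, hb, hA, hB, ⟨e⟩⟩ := not_not.mp hprime
    have hrank := hA.rank_prod hB (hX.congr e)
    lift a to ℕ using ha
    obtain ⟨R, hR, hRprime, hRA⟩ := ih a (by omega) hA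
    exact ⟨R, hR, hRprime, hRA.of_orderIso_prod hX e⟩

namespace OrderIso

section Projections
variable {A B X : Type*} [PartialOrder A] [PartialOrder B] [PartialOrder X] (e : A × B ≃o X)

/-- The meet of `x` with `e (⊤, ⊥)`. -/
def projFst [OrderBot B] (x : X) : X := e ((e.symm x).1, ⊥)

def projSnd [OrderBot A] (x : X) : X := e (⊥, (e.symm x).2)

lemma projFst_le [OrderBot B] (x : X) : e.projFst x ≤ x :=
  e.le_symm_apply.mp ⟨le_rfl, bot_le⟩

lemma projSnd_le [OrderBot A] (x : X) : e.projSnd x ≤ x :=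
  e.le_symm_apply.mp ⟨bot_le, le_rfl⟩

lemma projFst_le_apply [OrderBot B] {t : A} (ht : IsTop t) (x : X) : e.projFst x ≤ e (t, ⊥) :=
  e.monotone ⟨ht _, le_rfl⟩

lemma projSnd_le_apply [OrderBot A] {t : B} (ht : IsTop t) (x : X) : e.projSnd x ≤ e (⊥, t) :=
  e.monotone ⟨le_rfl, ht _⟩

lemma le_iff_projFst_le_and_projSnd_le [OrderBot A] [OrderBot B] {x y : X} :
    x ≤ y ↔ e.projFst x ≤ e.projFst y ∧ e.projSnd x ≤ e.projSnd y := by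
  rw [← e.symm.le_iff_le, Prod.le_def]
  simp [projFst, projSnd]

lemma exists_projFst_eq_projSnd_eq [OrderBot A] [OrderBot B] {tA : A} {tB : B} {u v : X}
    (hu : u ≤ e (tA, ⊥)) (hv : v ≤ e (⊥, tB)) :
    ∃ x, e.projFst x = u ∧ e.projSnd x = v ∧ ∀ w, u ≤ w → v ≤ w → x ≤ w := by
  have hu' := Prod.mk_fst_bot_of_le (e.symm_apply_le.mpr hu)
  have hv' := Prod.mk_bot_snd_of_le (e.symm_apply_le.mpr hv)
  refine ⟨e ((e.symm u).1, (e.symm v).2), ?_, ?_, fun w huw hvw => ?_⟩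
  · simp [projFst, hu']
  · simp [projSnd, hv']
  · exact e.le_symm_apply.mp ⟨(e.symm.monotone huw).1, (e.symm.monotone hvw).2⟩

end Projections

variable {A B C D : Type*} [PartialOrder A] [PartialOrder B] [PartialOrder C] [PartialOrder D]
  (e : A × B ≃o C × D)

theorem nonempty_fst_orderIso_Iic_prod [OrderBot B] {t : A} (ht : IsTop t) :
    Nonempty (A ≃o Iic (e (t, ⊥)).1 × Iic (e (t, ⊥)).2) := by
  have hle : ∀ a, e (a, ⊥) ≤ e (t, ⊥) := fun a => e.monotone ⟨ht a, le_rfl⟩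
  let F : A → Iic (e (t, ⊥)).1 × Iic (e (t, ⊥)).2 := fun a => (⟨_, (hle a).1⟩, ⟨_, (hle a).2⟩)
  have hF : ∀ a a', F a ≤ F a' ↔ a ≤ a' := fun a a' =>
    (Iff.rfl : F a ≤ F a' ↔ e (a, ⊥) ≤ e (a', ⊥)).trans (e.le_iff_le.trans (by simp))
  refine ⟨.ofSurjective (OrderEmbedding.ofMapLEIff F hF) fun ⟨⟨c, hc⟩, ⟨d, hd⟩⟩ =>
    ⟨(e.symm (c, d)).1, ?_⟩⟩
  have : e.symm (c, d) ≤ (t, ⊥) := e.symm_apply_le.mpr ⟨hc, hd⟩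
  ext <;> simp [F, Prod.mk_fst_bot_of_le this]

theorem nonempty_snd_orderIso_Iic_prod [OrderBot A] [OrderBot B] [OrderBot C] {tA : A} {tB : B}
    {tD : D} (hA : IsTop tA) (hB : IsTop tB) (hD : IsTop tD) :
    Nonempty (D ≃o Iic (e (tA, ⊥)).2 × Iic (e (⊥, tB)).2) := by
  have hfst : ∀ y : D, (e.projFst (⊥, y)).1 = ⊥ := fun y => le_bot_iff.mp (e.projFst_le _).1
  have hsnd : ∀ y : D, (e.projSnd (⊥, y)).1 = ⊥ := fun y => le_bot_iff.mp (e.projSnd_le _).1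
  let F : D → Iic (e (tA, ⊥)).2 × Iic (e (⊥, tB)).2 := fun y =>
    (⟨_, (e.projFst_le_apply hA (⊥, y)).2⟩, ⟨_, (e.projSnd_le_apply hB (⊥, y)).2⟩)
  have hF : ∀ y y', F y ≤ F y' ↔ y ≤ y' := fun y y' =>
    calc F y ≤ F y' ↔ e.projFst (⊥, y) ≤ e.projFst (⊥, y') ∧ e.projSnd (⊥, y) ≤ e.projSnd (⊥, y') :=
          by simp [F, Prod.le_def, ← Subtype.coe_le_coe, hfst, hsnd]
      _ ↔ y ≤ y' := by rw [← e.le_iff_projFst_le_and_projSnd_le]; simp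
  refine ⟨.ofSurjective (OrderEmbedding.ofMapLEIff F hF) fun ⟨⟨r, hr⟩, ⟨s, hs⟩⟩ => ?_⟩
  obtain ⟨x, hxr, hxs, hx⟩ := e.exists_projFst_eq_projSnd_eq (u := (⊥, r)) (v := (⊥, s))
    ⟨bot_le, hr⟩ ⟨bot_le, hs⟩
  have hx' := Prod.mk_bot_snd_of_le (hx (⊥, tD) ⟨le_rfl, hD r⟩ ⟨le_rfl, hD s⟩)
  refine ⟨x.2, ?_⟩
  ext <;> simp [F, hx', hxr, hxs]

def restrictFst [OrderBot B] [OrderBot D] (he : ∀ p, (e p).2 = ⊥ ↔ p.2 = ⊥) : A ≃o C :=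
  have hmk : ∀ a, ((e (a, ⊥)).1, ⊥) = e (a, ⊥) := fun a => Prod.ext rfl ((he _).mpr rfl).symm
  have hmk' : ∀ c, ((e.symm (c, ⊥)).1, ⊥) = e.symm (c, ⊥) := fun c =>
    Prod.ext rfl ((he _).mp (by rw [e.apply_symm_apply])).symm
  { toFun a := (e (a, ⊥)).1
    invFun c := (e.symm (c, ⊥)).1
    left_inv a := by simp only [hmk, e.symm_apply_apply]
    right_inv c := by simp only [hmk', e.apply_symm_apply]
    map_rel_iff' := fun {a a'} => by
      change (e (a, ⊥)).1 ≤ (e (a', ⊥)).1 ↔ a ≤ a'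
      calc (e (a, ⊥)).1 ≤ (e (a', ⊥)).1 ↔ ((e (a, ⊥)).1, (⊥ : D)) ≤ ((e (a', ⊥)).1, ⊥) := by simp
        _ ↔ a ≤ a' := by rw [hmk, hmk, e.le_iff_le]; simp }

def restrictSnd [OrderBot A] [OrderBot C] (he : ∀ p, (e p).1 = ⊥ ↔ p.1 = ⊥) : B ≃o D :=
  (prodComm.trans (e.trans prodComm)).restrictFst fun p => he p.swap

lemma eq_prodCongr_restrictFst_restrictSnd [OrderBot A] [OrderBot B] [OrderBot C] [OrderBot D]
    (he₁ : ∀ p, (e p).2 = ⊥ ↔ p.2 = ⊥)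
    (he₂ : ∀ p, (e p).1 = ⊥ ↔ p.1 = ⊥) :
    e = (e.restrictFst he₁).prodCongr (e.restrictSnd he₂) := by
  refine RelIso.ext fun ⟨a, b⟩ => ?_
  have hlub := (e.isLUB_image' (s := {(a, ⊥), (⊥, b)})).mpr (Prod.isLUB_pair_mk_bot a b)
  have ha : e (a, ⊥) = ((e (a, ⊥)).1, ⊥) := Prod.ext rfl ((he₁ _).mpr rfl)
  have hb : e (⊥, b) = (⊥, (e (⊥, b)).2) := Prod.ext ((he₂ _).mpr rfl) rfl
  rw [image_pair, ha, hb] at hlub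
  exact hlub.unique (Prod.isLUB_pair_mk_bot _ _)

noncomputable def autProdMulEquiv [OrderBot A] [OrderBot B]
    (h₁ : ∀ φ : A × B ≃o A × B, ∀ p, (φ p).2 = ⊥ ↔ p.2 = ⊥)
    (h₂ : ∀ φ : A × B ≃o A × B, ∀ p, (φ p).1 = ⊥ ↔ p.1 = ⊥) :
    (A × B ≃o A × B) ≃* (A ≃o A) × (B ≃o B) :=
  (MulEquiv.ofBijective (prodCongrHom A B) ⟨prodCongrHom_injective, fun φ =>
    ⟨(φ.restrictFst (h₁ φ), φ.restrictSnd (h₂ φ)),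
      (eq_prodCongr_restrictFst_restrictSnd φ (h₁ φ) (h₂ φ)).symm⟩⟩).symm

end OrderIso

theorem snd_apply_eq_bot_of_joinRelPrime {P Q : Type u} [PartialOrder P] [OrderBot P]
    [PartialOrder Q] [OrderBot Q] {m n : ℤ} (hP : IsAbstractPolytope P m)
    (hQ : IsAbstractPolytope Q n) (h : JoinRelPrime P Q) (φ : P × Q ≃o P × Q) {p : P × Q}
    (hp : p.2 = ⊥) : (φ p).2 = ⊥ := by
  obtain ⟨t, ht⟩ := hP.exists_top
  obtain ⟨t', ht'⟩ := hQ.exists_top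
  suffices hd : (φ (t, ⊥)).2 = ⊥ from
    le_bot_iff.mp (hd ▸ (φ.monotone ((Prod.snd_eq_bot_iff_le ht).mp hp)).2)
  obtain ⟨eP⟩ := φ.nonempty_fst_orderIso_Iic_prod ht
  obtain ⟨eQ⟩ := φ.nonempty_snd_orderIso_Iic_prod ht ht' ht'
  by_contra hd
  obtain ⟨k, hk⟩ := (hQ.congr eQ).of_prod_left
  have hk0 : 0 ≤ k := hk.nonneg_of_ne_bot (x := ⊤) fun h' => hd (congrArg Subtype.val h')
  obtain ⟨R, hR, hRprime, hRd⟩ := hk.exists_joinPrime_joinFactor hk0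
  exact h ⟨R, hR, hRprime, hRd.of_orderIso_prod hP (eP.trans OrderIso.prodComm),
    hRd.of_orderIso_prod hQ eQ⟩

theorem snd_apply_eq_bot_iff_of_joinRelPrime {P Q : Type u} [PartialOrder P] [OrderBot P]
    [PartialOrder Q] [OrderBot Q] {m n : ℤ} (hP : IsAbstractPolytope P m)
    (hQ : IsAbstractPolytope Q n) (h : JoinRelPrime P Q) (φ : P × Q ≃o P × Q) (p : P × Q) :
    (φ p).2 = ⊥ ↔ p.2 = ⊥ :=
  ⟨fun hp => by simpa using snd_apply_eq_bot_of_joinRelPrime hP hQ h φ.symm hp,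
    snd_apply_eq_bot_of_joinRelPrime hP hQ h φ⟩

/-- If abstract polytopes `P` and `Q` are relatively prime with respect to the join,
then `Aut(P * Q) ≅ Aut(P) × Aut(Q)`. -/
theorem aut_join_of_relPrime (P Q : Type u) [PartialOrder P] [OrderBot P]
    [PartialOrder Q] [OrderBot Q] (m n : ℤ)
    (hP : IsAbstractPolytope P m) (hQ : IsAbstractPolytope Q n)
    (h : JoinRelPrime P Q) :
    Nonempty (((P × Q) ≃o (P × Q)) ≃* ((P ≃o P) × (Q ≃o Q))) :=
  ⟨OrderIso.autProdMulEquiv (snd_apply_eq_bot_iff_of_joinRelPrime hP hQ h) fun φ p =>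
    snd_apply_eq_bot_iff_of_joinRelPrime hQ hP h.symm
      (OrderIso.prodComm.trans (φ.trans OrderIso.prodComm)) p.swap⟩
end

section
/- Let P be an abstract polytope that is not a pyramid, i.e. P is not order-isomorphic to Q * pt for any abstract polytope Q. Then for every k ≥ 1, Aut(P * pt^{*k}) is isomorphic as a group to Aut(P) × Sym(k). -/
universe u v

/-!
Call `a` an apex of a poset if `x ↦ x ⊔ a` is an order isomorphism from the elements not above
`a` onto those above it. An apex splits the poset as `{x // ¬ a ≤ x} * pt`, and the base of a
polytope split this way is again a polytope, so a poset with an apex is a pyramid.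

In `P * pt^{*k}` the vertices `(⊥, eᵢ)` of the simplex are apexes. An apex is an atom, and an
apex `(q, ⊥)` makes `q` an apex of `P`; so when `P` is not a pyramid these vertices are the only
apexes, and every automorphism `f` permutes them by some `σ`. Since `(⊥, eᵢ) ≤ (p, v)` iff
`v i`, the second coordinate of `f (p, v)` is `v ∘ σ⁻¹`. Hence `f` preserves the base
`P × {⊥}`, inducing some `g ∈ Aut(P)` there, and since `(p', ⊥) ≤ (p, v)` iff `p' ≤ p`, the
first coordinate of `f (p, v)` is `g p`.
-/

open Set

section Intervals
variable {α : Type*} [PartialOrder α]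

theorem Set.Icc.coe_eq_left_iff_isMin {a b : α} (x : Icc a b) : (x : α) = a ↔ IsMin x := by
  refine ⟨fun h y _ => Subtype.coe_le_coe.mp (h.le.trans y.2.1), fun h => ?_⟩
  have := h (show (⟨a, le_rfl, x.2.1.trans x.2.2⟩ : Icc a b) ≤ x from x.2.1)
  exact le_antisymm this x.2.1

theorem Set.Icc.coe_eq_right_iff_isMax {a b : α} (x : Icc a b) : (x : α) = b ↔ IsMax x := by
  refine ⟨fun h y _ => Subtype.coe_le_coe.mp (y.2.2.trans h.ge), fun h => ?_⟩
  have := h (show x ≤ (⟨b, x.2.1.trans x.2.2, le_rfl⟩ : Icc a b) from x.2.2)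
  exact le_antisymm x.2.2 this

end Intervals

section ProperPart
variable (T : Type*) [PartialOrder T]

def properPart : Set T := {a | ¬ IsMin a ∧ ¬ IsMax a}

def ProperAdj (a b : T) : Prop :=
  (¬ IsMin a ∧ ¬ IsMax a ∧ ¬ IsMin b ∧ ¬ IsMax b) ∧ (a ≤ b ∨ b ≤ a)

def ProperPartConnected : Prop :=
  (∃ c : Set T, IsMaxChain (· ≤ ·) c ∧ 4 ≤ c.ncard) →
    ∀ F G : T, ¬ IsMin F → ¬ IsMax F → ¬ IsMin G → ¬ IsMax G →
      Relation.ReflTransGen (ProperAdj T) F G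

def ProperPartDiamond : Prop :=
  (∀ c : Set T, IsMaxChain (· ≤ ·) c → c.ncard = 4) → (properPart T).ncard = 2

variable {T} {T' : Type*} [PartialOrder T']

theorem preimage_properPart (e : T ≃o T') : e ⁻¹' properPart T' = properPart T := by
  ext a
  simp only [properPart, mem_preimage, mem_ofPred_eq, e.isMin_apply, e.isMax_apply]

theorem properAdj_apply_iff (e : T ≃o T') {a b : T} :
    ProperAdj T' (e a) (e b) ↔ ProperAdj T a b := by
  simp only [ProperAdj, e.isMin_apply, e.isMax_apply, e.le_iff_le]

theorem ProperPartConnected.of_orderIso (e : T ≃o T') (h : ProperPartConnected T') :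
    ProperPartConnected T := by
  rintro ⟨c, hc, hc4⟩ F G hF₁ hF₂ hG₁ hG₂
  have hpath := h ⟨e '' c, hc.image e, by rwa [ncard_image_of_injective _ e.injective]⟩
    (e F) (e G) (by rwa [e.isMin_apply]) (by rwa [e.isMax_apply]) (by rwa [e.isMin_apply])
    (by rwa [e.isMax_apply])
  simpa [Function.onFun] using
    hpath.lift e.symm fun a b hab => (properAdj_apply_iff e.symm).mpr hab

theorem ProperPartDiamond.of_orderIso (e : T ≃o T') (h : ProperPartDiamond T') :
    ProperPartDiamond T := by
  intro hc
  rw [← preimage_properPart e, ncard_preimage_of_injective_subset_range e.injective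
    (by simp)]
  refine h fun c hc' => ?_
  rw [← hc _ (hc'.image e.symm), ncard_image_of_injective _ e.symm.injective]

end ProperPart

section IntervalConditions
variable {α : Type*} [PartialOrder α] {x z : α}

theorem connected_Icc_iff :
    ((∃ c : Set (Icc x z), IsMaxChain (· ≤ ·) c ∧ 4 ≤ c.ncard) →
      ∀ F G : Icc x z, (F : α) ≠ x → (F : α) ≠ z → (G : α) ≠ x → (G : α) ≠ z →
        Relation.ReflTransGen
          (fun a b : Icc x z =>
            ((a : α) ≠ x ∧ (a : α) ≠ z ∧ (b : α) ≠ x ∧ (b : α) ≠ z) ∧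
              ((a : α) ≤ (b : α) ∨ (b : α) ≤ (a : α))) F G) ↔
      ProperPartConnected (Icc x z) := by
  simp only [ne_eq, Icc.coe_eq_left_iff_isMin, Icc.coe_eq_right_iff_isMax, Subtype.coe_le_coe]
  rfl

theorem ncard_Ioo_eq_ncard_properPart :
    {y : α | x < y ∧ y < z}.ncard = (properPart (Icc x z)).ncard := by
  rw [← ncard_image_of_injective _ Subtype.val_injective]
  congr 1
  ext y
  simp only [properPart, mem_ofPred_eq, mem_image, ← Icc.coe_eq_left_iff_isMin,
    ← Icc.coe_eq_right_iff_isMax, Subtype.exists, mem_Icc]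
  constructor
  · rintro ⟨hxy, hyz⟩
    exact ⟨y, ⟨hxy.le, hyz.le⟩, ⟨hxy.ne', hyz.ne⟩, rfl⟩
  · rintro ⟨y, ⟨hxy, hyz⟩, ⟨hx, hz⟩, rfl⟩
    exact ⟨lt_of_le_of_ne hxy (Ne.symm hx), lt_of_le_of_ne hyz hz⟩

end IntervalConditions

section Chains
variable {α : Type*} {r : α → α → Prop} {s : Set α}

theorem IsMaxChain.mem_of_isChain_insert (hs : IsMaxChain r s) {y : α}
    (hy : IsChain r (insert y s)) : y ∈ s :=
  hs.2 hy (subset_insert _ _) ▸ mem_insert _ _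

theorem IsMaxChain.of_forall_isChain_insert (hs : IsChain r s)
    (h : ∀ y, IsChain r (insert y s) → y ∈ s) : IsMaxChain r s :=
  ⟨hs, fun _ ht hst => hst.antisymm fun y hy => h y (ht.mono (insert_subset hy hst))⟩

end Chains

noncomputable def OrderEmbedding.orderIsoIcc {α β : Type*} [PartialOrder α] [PartialOrder β]
    (f : α ↪o β) (hf : (range f).OrdConnected) (x z : α) : Icc x z ≃o Icc (f x) (f z) :=
  OrderIso.ofSurjective
    (OrderEmbedding.ofMapLEIff (fun a => ⟨f a, f.monotone a.2.1, f.monotone a.2.2⟩)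
      fun _ _ => f.le_iff_le)
    fun ⟨y, hy⟩ => by
      obtain ⟨a, rfl⟩ := hf.out (mem_range_self x) (mem_range_self z) hy
      exact ⟨⟨a, f.le_iff_le.1 hy.1, f.le_iff_le.1 hy.2⟩, rfl⟩

section Polytope
variable {X Y : Type*} [PartialOrder X] [OrderBot X] [PartialOrder Y] [OrderBot Y] {n m : ℤ}

theorem IsAbstractPolytope.of_orderEmbedding (hX : IsAbstractPolytope X n) (f : Y ↪o X)
    (hf : (range f).OrdConnected) (hm : -1 ≤ m) (htop : ∃ t : Y, IsTop t)
    (hchain : ∀ s : Set Y, IsMaxChain (· ≤ ·) s → s.ncard = (m + 2).toNat) :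
    IsAbstractPolytope Y m where
  neg_one_le := hm
  exists_top := htop
  maxChain_card := hchain
  connected x z hxz := connected_Icc_iff.mpr <| .of_orderIso (f.orderIsoIcc hf x z) <|
    connected_Icc_iff.mp (hX.connected _ _ (f.monotone hxz))
  diamond x z hxz := by
    rw [ncard_Ioo_eq_ncard_properPart]
    refine ProperPartDiamond.of_orderIso (f.orderIsoIcc hf x z) fun hc => ?_
    rw [← ncard_Ioo_eq_ncard_properPart]
    exact hX.diamond _ _ (f.strictMono hxz) hc

theorem IsAbstractPolytope.of_orderIso (hX : IsAbstractPolytope X n) (e : X ≃o Y) :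
    IsAbstractPolytope Y n := by
  obtain ⟨t, ht⟩ := hX.exists_top
  refine hX.of_orderEmbedding e.symm.toOrderEmbedding (by simp [ordConnected_univ])
    hX.neg_one_le ⟨e t, fun y => e.symm_apply_le.mp (ht _)⟩ fun s hs => ?_
  rw [← hX.maxChain_card _ (hs.image e.symm), ncard_image_of_injective _ e.symm.injective]

theorem IsMaxChain.insert_top_prod_bool {Q : Type*} [PartialOrder Q] {c : Set Q} {t : Q}
    (ht : IsTop t) (hc : IsMaxChain (· ≤ ·) c) :
    IsMaxChain (· ≤ ·) (insert (t, true) ((·, false) '' c)) := by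
  have htc : t ∈ c := hc.mem_of_isChain_insert (hc.1.insert fun b _ _ => Or.inr (ht b))
  refine .of_forall_isChain_insert ?_ fun ⟨p, b⟩ hy => ?_
  · refine (IsChain.image_of_map_rel _ _ (·, false) (fun _ _ h => ⟨h, le_rfl⟩) hc.1).insert ?_
    rintro _ ⟨q, -, rfl⟩ -
    exact Or.inr ⟨ht q, Bool.false_le _⟩
  have hcomp : ∀ q ∈ c, (p, b) ≤ (q, false) ∨ (q, false) ≤ (p, b) := fun q hq =>
    hy.total (mem_insert _ _) (mem_insert_of_mem _ (mem_insert_of_mem _ ⟨q, hq, rfl⟩))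
  cases b with
  | true =>
    rcases hcomp t htc with h | h
    · exact absurd h.2 (by simp)
    · rw [le_antisymm (ht p) h.1]
      exact mem_insert _ _
  | false =>
    refine mem_insert_of_mem _ ⟨p, hc.mem_of_isChain_insert (hc.1.insert fun q hq _ => ?_), rfl⟩
    exact (hcomp q hq).imp (·.1) (·.1)

theorem IsAbstractPolytope.of_prod_bool {Q : Type*} [PartialOrder Q] [OrderBot Q]
    (h : IsAbstractPolytope (Q × Bool) n) : IsAbstractPolytope Q (n - 1) := by
  obtain ⟨t, ht⟩ := h.exists_top
  have hT : IsTop t.1 := fun q => (ht (q, t.2)).1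
  have hcard : ∀ c : Set Q, IsMaxChain (· ≤ ·) c →
      0 < c.ncard ∧ c.ncard + 1 = (n + 2).toNat := by
    intro c hc
    have hc' := hc.insert_top_prod_bool hT
    have hfin' : (insert (t.1, true) ((·, false) '' c)).Finite :=
      finite_of_ncard_ne_zero (by rw [h.maxChain_card _ hc']; have := h.neg_one_le; omega)
    have hfin : c.Finite := (hfin'.subset (subset_insert _ _)).of_finite_image
      (Prod.mk_left_injective false).injOn
    refine ⟨(ncard_pos hfin).2 ⟨⊥, hc.bot_mem⟩, ?_⟩
    rw [← h.maxChain_card _ hc', ncard_insert_of_notMem (by simp) (hfin.image _),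
      ncard_image_of_injective _ (Prod.mk_left_injective false)]
  obtain ⟨c, hc, -⟩ := (IsChain.empty (r := ((· ≤ ·) : Q → Q → Prop))).exists_maxChain
  have hn : 0 ≤ n := by have := hcard c hc; omega
  refine h.of_orderEmbedding (.ofMapLEIff (·, false) fun _ _ => by simp) ?_ (by omega)
    ⟨t.1, hT⟩ fun c hc => by have := hcard c hc; omega
  refine IsLowerSet.ordConnected fun _ x hxy hy => ?_
  obtain ⟨q, rfl⟩ := hy
  exact ⟨x.1, Prod.ext rfl (le_bot_iff.mp hxy.2).symm⟩

end Polytope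

theorem isLUB_pair_of_le {α : Type*} [Preorder α] {a b : α} (h : b ≤ a) : IsLUB {a, b} a :=
  IsGreatest.isLUB ⟨mem_insert _ _, by simp [upperBounds, h]⟩

section Apex
variable {X Y : Type*} [PartialOrder X] [PartialOrder Y] {a : X}

structure IsApex (a : X) : Prop where
  exists_isLUB : ∀ x, ¬ a ≤ x → ∃ y, IsLUB {x, a} y
  exists_of_le : ∀ y, a ≤ y → ∃ x, ¬ a ≤ x ∧ IsLUB {x, a} y
  le_iff_le : ∀ x x' y y', ¬ a ≤ x → ¬ a ≤ x' → IsLUB {x, a} y → IsLUB {x', a} y' →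
    (y ≤ y' ↔ x ≤ x')

theorem OrderIso.isLUB_pair_apply_iff (e : X ≃o Y) {x a y : X} :
    IsLUB {e x, e a} (e y) ↔ IsLUB {x, a} y := by
  rw [← image_pair, e.isLUB_image']

theorem IsApex.map (e : X ≃o Y) (h : IsApex a) : IsApex (e a) where
  exists_isLUB := e.surjective.forall.2 fun x hx => by
    obtain ⟨y, hy⟩ := h.exists_isLUB x (by rwa [← e.le_iff_le])
    exact ⟨e y, e.isLUB_pair_apply_iff.2 hy⟩
  exists_of_le := e.surjective.forall.2 fun y hy => by
    obtain ⟨x, hx, hxy⟩ := h.exists_of_le y (e.le_iff_le.1 hy)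
    exact ⟨e x, by rwa [e.le_iff_le], e.isLUB_pair_apply_iff.2 hxy⟩
  le_iff_le := e.surjective.forall.2 fun x => e.surjective.forall.2 fun x' =>
    e.surjective.forall.2 fun y => e.surjective.forall.2 fun y' => by
      simp only [e.le_iff_le, e.isLUB_pair_apply_iff]
      exact h.le_iff_le x x' y y'

theorem OrderIso.isApex_apply_iff (e : X ≃o Y) : IsApex (e a) ↔ IsApex a :=
  ⟨fun h => by simpa using h.map e.symm, .map e⟩

section OrderBot
variable [OrderBot X]

theorem IsApex.not_le_bot (h : IsApex a) : ¬ a ≤ ⊥ := by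
  obtain ⟨x, hx, -⟩ := h.exists_of_le a le_rfl
  exact fun ha => hx (ha.trans bot_le)

theorem IsApex.eq_bot_of_lt (h : IsApex a) {b : X} (hb : b < a) : b = ⊥ := by
  have hb' : IsLUB {b, a} a := pair_comm a b ▸ isLUB_pair_of_le hb.le
  have hbot : IsLUB {⊥, a} a := pair_comm a ⊥ ▸ isLUB_pair_of_le bot_le
  exact le_bot_iff.1 ((h.le_iff_le b ⊥ a a hb.not_ge h.not_le_bot hb' hbot).1 le_rfl)

end OrderBot

variable (h : IsApex a)

noncomputable def IsApex.join (x : {x : X // ¬ a ≤ x}) : X := (h.exists_isLUB x x.2).choose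

theorem IsApex.isLUB_join (x : {x : X // ¬ a ≤ x}) : IsLUB {(x : X), a} (h.join x) :=
  (h.exists_isLUB x x.2).choose_spec

theorem IsApex.join_le_join_iff {x x' : {x : X // ¬ a ≤ x}} :
    h.join x ≤ h.join x' ↔ x ≤ x' :=
  h.le_iff_le x x' _ _ x.2 x'.2 (h.isLUB_join x) (h.isLUB_join x')

theorem IsApex.le_join_iff {x x' : {x : X // ¬ a ≤ x}} : (x : X) ≤ h.join x' ↔ x ≤ x' := by
  refine ⟨fun hx => h.join_le_join_iff.1 ((h.isLUB_join x).2 ?_), fun hx => ?_⟩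
  · rintro _ (rfl | rfl)
    exacts [hx, (h.isLUB_join x').1 (mem_insert_of_mem _ rfl)]
  · exact le_trans hx ((h.isLUB_join x').1 (mem_insert _ _))

theorem IsApex.not_join_le (x x' : {x : X // ¬ a ≤ x}) : ¬ h.join x ≤ x' :=
  fun hx => x'.2 (((h.isLUB_join x).1 (mem_insert_of_mem _ rfl)).trans hx)

noncomputable def IsApex.orderIsoProdBool : {x : X // ¬ a ≤ x} × Bool ≃o X :=
  OrderIso.ofSurjective
    (OrderEmbedding.ofMapLEIff (fun p => cond p.2 (h.join p.1) p.1) <| by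
      rintro ⟨x, _ | _⟩ ⟨x', _ | _⟩ <;>
        simp [Prod.mk_le_mk, h.join_le_join_iff, h.le_join_iff, h.not_join_le])
    fun y => by
      by_cases hy : a ≤ y
      · obtain ⟨x, hx, hxy⟩ := h.exists_of_le y hy
        exact ⟨(⟨x, hx⟩, true), (h.isLUB_join ⟨x, hx⟩).unique hxy⟩
      · exact ⟨(⟨y, hy⟩, false), rfl⟩

end Apex

theorem IsApex.isPyramid {X : Type*} [PartialOrder X] [OrderBot X] {a : X} {n : ℤ}
    (hX : IsAbstractPolytope X n) (h : IsApex a) : IsPyramid X := by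
  let : OrderBot {x : X // ¬ a ≤ x} := Subtype.orderBot h.not_le_bot
  exact ⟨⟨{x : X // ¬ a ≤ x}⟩, ⟨n - 1, (hX.of_orderIso h.orderIsoProdBool.symm).of_prod_bool⟩,
    ⟨h.orderIsoProdBool.symm⟩⟩

section ProdBot
variable {P V : Type*} [PartialOrder P] [PartialOrder V] [OrderBot V]

theorem isLUB_pair_mk_bot_iff {x q : P} {y : P × V} :
    IsLUB {((x, ⊥) : P × V), (q, ⊥)} y ↔ IsLUB {x, q} y.1 ∧ y.2 = ⊥ := by
  rw [isLUB_prod, image_pair, image_pair, pair_eq_singleton]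
  exact and_congr_right fun _ =>
    ⟨fun h => h.unique isLUB_singleton, fun h => h ▸ isLUB_singleton⟩

theorem IsApex.of_mk_bot {q : P} (h : IsApex ((q, ⊥) : P × V)) : IsApex q where
  exists_isLUB x hx := by
    obtain ⟨y, hy⟩ := h.exists_isLUB (x, ⊥) fun h' => hx h'.1
    exact ⟨y.1, (isLUB_pair_mk_bot_iff.1 hy).1⟩
  exists_of_le y hy := by
    obtain ⟨⟨x, w⟩, hx, hxy⟩ := h.exists_of_le (y, ⊥) ⟨hy, le_rfl⟩
    obtain rfl : w = ⊥ := le_bot_iff.1 (hxy.1 (mem_insert _ _)).2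
    exact ⟨x, fun h' => hx ⟨h', le_rfl⟩, (isLUB_pair_mk_bot_iff.1 hxy).1⟩
  le_iff_le x x' y y' hx hx' hy hy' := by
    simpa [Prod.mk_le_mk] using h.le_iff_le (x, ⊥) (x', ⊥) (y, ⊥) (y', ⊥)
      (fun h' => hx h'.1) (fun h' => hx' h'.1) (isLUB_pair_mk_bot_iff.2 ⟨hy, rfl⟩)
      (isLUB_pair_mk_bot_iff.2 ⟨hy', rfl⟩)

end ProdBot

section JoinSimplex
variable {P : Type*} [PartialOrder P] [OrderBot P] {ι : Type*} [DecidableEq ι]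

def boolSingle (i : ι) : ι → Bool := fun j => decide (j = i)

theorem boolSingle_le_iff {i : ι} {v : ι → Bool} : boolSingle i ≤ v ↔ v i = true := by
  refine ⟨fun h => Bool.le_iff_imp.1 (h i) (by simp [boolSingle]), fun h j => ?_⟩
  by_cases hj : j = i
  · subst hj; simp [h]
  · simp [boolSingle, hj]

theorem boolSingle_injective : Function.Injective (boolSingle : ι → ι → Bool) := fun i j h => by
  simpa [boolSingle] using congrFun h i

theorem boolSingle_ne_bot (i : ι) : boolSingle i ≠ ⊥ := fun h => by
  simpa [boolSingle] using congrFun h i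

theorem mk_bot_boolSingle_le_iff {i : ι} {x : P × (ι → Bool)} :
    ((⊥, boolSingle i) : P × (ι → Bool)) ≤ x ↔ x.2 i = true := by
  simp [Prod.le_def, boolSingle_le_iff]

theorem isLUB_pair_mk_bot_boolSingle (x : P × (ι → Bool)) (i : ι) :
    IsLUB {x, (⊥, boolSingle i)} (x.1, x.2 ⊔ boolSingle i) := by
  rw [isLUB_prod, image_pair, image_pair]
  exact ⟨isLUB_pair_of_le bot_le, isLUB_pair⟩

theorem isApex_mk_bot_boolSingle (i : ι) : IsApex ((⊥, boolSingle i) : P × (ι → Bool)) where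
  exists_isLUB x _ := ⟨_, isLUB_pair_mk_bot_boolSingle x i⟩
  exists_of_le y hy := by
    refine ⟨(y.1, y.2 \ boolSingle i), by simp [boolSingle_ne_bot], ?_⟩
    simpa only [sdiff_sup_cancel hy.2] using
      isLUB_pair_mk_bot_boolSingle (y.1, y.2 \ boolSingle i) i
  le_iff_le x x' y y' hx hx' hy hy' := by
    rw [hy.unique (isLUB_pair_mk_bot_boolSingle x i),
      hy'.unique (isLUB_pair_mk_bot_boolSingle x' i)]
    rw [mk_bot_boolSingle_le_iff, Bool.not_eq_true] at hx hx'
    simp only [Prod.le_def, and_congr_right_iff, Pi.le_def]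
    refine fun _ => forall_congr' fun j => ?_
    by_cases hj : j = i
    · subst hj; simp [boolSingle, hx, hx']
    · simp [boolSingle, hj]

theorem isApex_iff_exists_eq (hP : ∀ q : P, ¬ IsApex q) {a : P × (ι → Bool)} :
    IsApex a ↔ ∃ i, (⊥, boolSingle i) = a := by
  refine ⟨fun h => ?_, fun ⟨i, hi⟩ => hi ▸ isApex_mk_bot_boolSingle i⟩
  obtain ⟨p, v⟩ := a
  by_cases hv : v = ⊥
  · subst hv
    exact (hP p h.of_mk_bot).elim
  obtain ⟨i, hi⟩ : ∃ i, v i = true := by simpa [funext_iff] using hv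
  refine ⟨i, by_contra fun hne => ?_⟩
  have hlt : ((⊥, boolSingle i) : P × (ι → Bool)) < (p, v) :=
    lt_of_le_of_ne (mk_bot_boolSingle_le_iff.2 hi) hne
  exact boolSingle_ne_bot i (congrArg Prod.snd (h.eq_bot_of_lt hlt))

noncomputable def apexEquiv (hP : ∀ q : P, ¬ IsApex q) :
    ι ≃ {a : P × (ι → Bool) // IsApex a} :=
  .ofBijective (fun i => ⟨(⊥, boolSingle i), isApex_mk_bot_boolSingle i⟩)
    ⟨fun _ _ h => boolSingle_injective (congrArg (Prod.snd ∘ Subtype.val) h),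
      fun ⟨_, ha⟩ => ((isApex_iff_exists_eq hP).1 ha).imp fun _ => Subtype.ext⟩

noncomputable def apexPerm (hP : ∀ q : P, ¬ IsApex q) (f : P × (ι → Bool) ≃o P × (ι → Bool)) :
    Equiv.Perm ι :=
  (apexEquiv hP).trans <|
    (f.toEquiv.subtypeEquiv fun _ => f.isApex_apply_iff.symm).trans (apexEquiv hP).symm

variable (hP : ∀ q : P, ¬ IsApex q) (f : P × (ι → Bool) ≃o P × (ι → Bool))

theorem apply_mk_bot_boolSingle (i : ι) :
    f (⊥, boolSingle i) = (⊥, boolSingle (apexPerm hP f i)) :=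
  (congrArg Subtype.val ((apexEquiv hP).apply_symm_apply
    ((f.toEquiv.subtypeEquiv fun _ => f.isApex_apply_iff.symm) (apexEquiv hP i)))).symm

theorem snd_apply_eq_comp_apexPerm_symm (x : P × (ι → Bool)) :
    (f x).2 = x.2 ∘ (apexPerm hP f).symm := by
  funext j
  have hj : f.symm (⊥, boolSingle j) = (⊥, boolSingle ((apexPerm hP f).symm j)) :=
    f.symm_apply_eq.2 (by rw [apply_mk_bot_boolSingle hP, Equiv.apply_symm_apply])
  rw [Function.comp_apply, Bool.eq_iff_iff, ← mk_bot_boolSingle_le_iff,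
    ← mk_bot_boolSingle_le_iff, ← hj, f.symm_apply_le]

end JoinSimplex

section BotFiber
variable {P V : Type*} [PartialOrder P] [PartialOrder V] [OrderBot V] (f : P × V ≃o P × V)

theorem OrderIso.snd_symm_apply_eq_bot_iff (hf : ∀ x, (f x).2 = ⊥ ↔ x.2 = ⊥) (x : P × V) :
    (f.symm x).2 = ⊥ ↔ x.2 = ⊥ := by
  rw [← hf, f.apply_symm_apply]

theorem OrderIso.mk_fst_apply_mk_bot (hf : ∀ x, (f x).2 = ⊥ ↔ x.2 = ⊥) (p : P) :
    ((f (p, ⊥)).1, ⊥) = f (p, ⊥) :=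
  Prod.ext rfl ((hf _).2 rfl).symm

def OrderIso.botFiber (hf : ∀ x, (f x).2 = ⊥ ↔ x.2 = ⊥) : P ≃o P where
  toFun p := (f (p, ⊥)).1
  invFun p := (f.symm (p, ⊥)).1
  left_inv p := by
    dsimp only
    rw [f.mk_fst_apply_mk_bot hf, f.symm_apply_apply]
  right_inv p := by
    dsimp only
    rw [f.symm.mk_fst_apply_mk_bot (f.snd_symm_apply_eq_bot_iff hf), f.apply_symm_apply]
  map_rel_iff' {p q} := by
    dsimp only [Equiv.coe_fn_mk]
    rw [← Prod.mk_le_mk_iff_left (b := (⊥ : V)), f.mk_fst_apply_mk_bot hf,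
      f.mk_fst_apply_mk_bot hf, f.le_iff_le, Prod.mk_le_mk_iff_left]

theorem OrderIso.fst_apply_eq_botFiber (hf : ∀ x, (f x).2 = ⊥ ↔ x.2 = ⊥) (x : P × V) :
    (f x).1 = f.botFiber hf x.1 := by
  have hbase : ((x.1, ⊥) : P × V) ≤ x := ⟨le_rfl, bot_le⟩
  refine le_antisymm ?_ (f.monotone hbase).1
  have hx : f.symm ((f x).1, ⊥) ≤ x := f.symm_apply_le.2 ⟨le_rfl, bot_le⟩
  have hx₁ : f.symm ((f x).1, ⊥) ≤ (x.1, ⊥) :=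
    ⟨hx.1, ((f.snd_symm_apply_eq_bot_iff hf _).2 rfl).le⟩
  exact (f.symm_apply_le.1 hx₁).1

end BotFiber

section AutJoinSimplex
variable (P : Type*) [PartialOrder P] [OrderBot P] (ι : Type*)

def prodPermHom : (P ≃o P) × Equiv.Perm ι →* (P × (ι → Bool)) ≃o (P × (ι → Bool)) where
  toFun gσ :=
    { toEquiv := gσ.1.toEquiv.prodCongr (gσ.2.arrowCongr (.refl Bool))
      map_rel_iff' {x y} := by
        show (gσ.1 x.1, x.2 ∘ gσ.2.symm) ≤ (gσ.1 y.1, y.2 ∘ gσ.2.symm) ↔ x ≤ y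
        exact and_congr gσ.1.le_iff_le
          (gσ.2.symm.forall_congr_right (q := fun i => x.2 i ≤ y.2 i)) }
  map_one' := rfl
  map_mul' _ _ := rfl

variable {P ι}

theorem prodPermHom_injective : Function.Injective (prodPermHom P ι) := by
  classical
  refine (injective_iff_map_eq_one _).2 fun ⟨g, σ⟩ h => ?_
  have hx := DFunLike.congr_fun h
  refine Prod.ext (RelIso.ext fun p => congrArg Prod.fst (hx (p, ⊥))) (Equiv.ext fun i => ?_)
  have hi : boolSingle i (σ.symm (σ i)) = boolSingle i (σ i) :=
    congrFun (congrArg Prod.snd (hx (⊥, boolSingle i))) (σ i)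
  simpa [boolSingle] using hi.symm

theorem prodPermHom_surjective (hP : ∀ q : P, ¬ IsApex q) :
    Function.Surjective (prodPermHom P ι) := fun f => by
  classical
  have hf : ∀ x, (f x).2 = ⊥ ↔ x.2 = ⊥ := fun x => by
    rw [snd_apply_eq_comp_apexPerm_symm hP, Equiv.comp_symm_eq]
    rfl
  refine ⟨(f.botFiber hf, apexPerm hP f), RelIso.ext fun x => Prod.ext ?_ ?_⟩
  · exact (f.fst_apply_eq_botFiber hf x).symm
  · exact (snd_apply_eq_comp_apexPerm_symm hP f x).symm

end AutJoinSimplex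

theorem aut_join_simplex_of_not_pyramid_general (P : Type u) [PartialOrder P] [OrderBot P] (n : ℤ)
    (hP : IsAbstractPolytope P n) (hpyr : ¬ IsPyramid P) (k : ℕ) :
    Nonempty (((P × (Fin k → Bool)) ≃o (P × (Fin k → Bool))) ≃*
      ((P ≃o P) × Equiv.Perm (Fin k))) :=
  ⟨(MulEquiv.ofBijective (prodPermHom P (Fin k))
    ⟨prodPermHom_injective, prodPermHom_surjective fun _ ha => hpyr (ha.isPyramid hP)⟩).symm⟩

/-- If the abstract polytope `P` is not a pyramid, then for every `k ≥ 1`,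
`Aut(P * pt^{*k}) ≅ Aut(P) × Sym(k)`, where `pt^{*k} = Fin k → Bool` is the `k`-fold join of
the two-element chain `pt = Bool`. -/
theorem aut_join_simplex_of_not_pyramid (P : Type u) [PartialOrder P] [OrderBot P] (n : ℤ)
    (hP : IsAbstractPolytope P n) (hpyr : ¬ IsPyramid P) (k : ℕ) (hk : 1 ≤ k) :
    Nonempty (((P × (Fin k → Bool)) ≃o (P × (Fin k → Bool))) ≃*
      ((P ≃o P) × Equiv.Perm (Fin k))) :=
  aut_join_simplex_of_not_pyramid_general P n hP hpyr k
end
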